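/- Equivalence of the CDF form and the quantile form of the one-dimensional earth mover's distance: let μ and ν be probability measures on ℝ with cumulative distribution functions F(t) = μ(Iic t) and G(t) = ν(Iic t), and define their generalized inverse (quantile) functions F⁻¹(p) = sInf {x : p ≤ F(x)} and G⁻¹(p) = sInf {x : p ≤ G(x)} for p ∈ (0,1). Then ∫⁻_{t ∈ ℝ} ENNReal.ofReal |F(t) − G(t)| dt = ∫⁻_{p ∈ Ioo 0 1} ENNReal.ofReal |F⁻¹(p) − G⁻¹(p)| dp, where both sides are Lebesgue integrals with values in [0, ∞] (they may both be infinite). -/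

import Mathlib

open MeasureTheory Set Filter Topology ProbabilityTheory
open scoped Interval symmDiff

/-!
Both sides are the Lebesgue measure of the region between the graphs of the two distribution
functions, `{(t, p) | 0 < p < 1, p lies between F t and G t}`. Its section at fixed `t` is an
interval of length `|F t - G t|`. By right continuity, `p ≤ F t ↔ F⁻¹ p ≤ t`, so its section at
fixed `p` is the interval between `F⁻¹ p` and `G⁻¹ p`. Tonelli's theorem equates the two iterated
integrals.
-/

namespace Set

variable {α : Type*} [LinearOrder α]

theorem Iic_symmDiff_Iic (a b : α) : Iic a ∆ Iic b = Ι a b := by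
  ext x
  simp only [mem_symmDiff, mem_Iic, mem_uIoc, not_le]
  tauto

theorem Ici_symmDiff_Ici (a b : α) : Ici a ∆ Ici b = Ico (min a b) (max a b) := by
  rw [symmDiff_def, Ici_sdiff_Ici, Ici_sdiff_Ici, max_comm]
  exact Ico_union_Ico' le_rfl le_rfl

end Set

namespace Real

theorem volume_Ici_symmDiff_Ici (a b : ℝ) :
    volume (Ici a ∆ Ici b) = ENNReal.ofReal |a - b| := by
  rw [Ici_symmDiff_Ici, volume_Ico, max_sub_min_eq_abs']

theorem volume_restrict_Ioo_Iic_symmDiff_Iic {a b c d : ℝ} (ha : a ∈ Icc c d)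
    (hb : b ∈ Icc c d) :
    volume.restrict (Ioo c d) (Iic a ∆ Iic b) = ENNReal.ofReal |a - b| := by
  rw [Measure.restrict_congr_set Ioo_ae_eq_Icc, Iic_symmDiff_Iic,
    Measure.restrict_apply measurableSet_uIoc,
    inter_eq_left.2 (uIoc_subset_uIcc.trans (uIcc_subset_Icc ha hb)), volume_uIoc, abs_sub_comm]

end Real

theorem StieltjesFunction.setOf_le_eq_Ici_sInf (f : StieltjesFunction ℝ) {p : ℝ}
    (hbot : ∃ x, f x < p) (htop : ∃ x, p ≤ f x) :
    {x | p ≤ f x} = Ici (sInf {x | p ≤ f x}) := by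
  set S := {x | p ≤ f x}
  have hbdd : BddBelow S := by
    obtain ⟨x₀, hx₀⟩ := hbot
    exact ⟨x₀, fun y hy => le_of_not_ge fun hyx => (hy.trans (f.mono hyx)).not_gt hx₀⟩
  have hmem : sInf S ∈ S := by
    refine ge_of_tendsto ((f.right_continuous _).mono_left (nhdsWithin_mono _ Ioi_subset_Ici_self))
      (eventually_nhdsWithin_of_forall fun y hy => ?_)
    obtain ⟨x, hxS, hxy⟩ := exists_lt_of_csInf_lt htop hy
    exact le_trans hxS (f.mono hxy.le)
  ext t
  exact ⟨csInf_le hbdd, fun ht => hmem.trans (f.mono ht)⟩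

theorem ProbabilityTheory.setOf_le_cdf_eq_Ici_sInf (μ : Measure ℝ) {p : ℝ}
    (hp : p ∈ Ioo 0 1) :
    {x | p ≤ cdf μ x} = Ici (sInf {x | p ≤ cdf μ x}) :=
  (cdf μ).setOf_le_eq_Ici_sInf ((tendsto_cdf_atBot μ).eventually (eventually_lt_nhds hp.1)).exists
    ((tendsto_cdf_atTop μ).eventually (eventually_ge_nhds hp.2)).exists

/-- Equivalence of the CDF form and the quantile form of the one-dimensional
earth mover's distance. -/
theorem emd_cdf_eq_quantile (μ ν : Measure ℝ)
    [IsProbabilityMeasure μ] [IsProbabilityMeasure ν]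
    (F G : ℝ → ℝ)
    (hF : ∀ t : ℝ, F t = (μ (Set.Iic t)).toReal)
    (hG : ∀ t : ℝ, G t = (ν (Set.Iic t)).toReal)
    (Finv Ginv : ℝ → ℝ)
    (hFinv : ∀ p ∈ Set.Ioo (0 : ℝ) 1, Finv p = sInf {x : ℝ | p ≤ F x})
    (hGinv : ∀ p ∈ Set.Ioo (0 : ℝ) 1, Ginv p = sInf {x : ℝ | p ≤ G x}) :
    ∫⁻ t : ℝ, ENNReal.ofReal |F t - G t| =
      ∫⁻ p in Set.Ioo (0 : ℝ) 1, ENNReal.ofReal |Finv p - Ginv p| := by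
  obtain rfl : F = cdf μ := funext fun t => by rw [hF, cdf_eq_real, measureReal_def]
  obtain rfl : G = cdf ν := funext fun t => by rw [hG, cdf_eq_real, measureReal_def]
  set E : Set (ℝ × ℝ) := {q | q.2 ≤ cdf μ q.1} ∆ {q | q.2 ≤ cdf ν q.1}
  have hE : MeasurableSet E :=
    (measurableSet_le measurable_snd ((monotone_cdf μ).measurable.comp measurable_fst)).symmDiff
      (measurableSet_le measurable_snd ((monotone_cdf ν).measurable.comp measurable_fst))
  calc ∫⁻ t, ENNReal.ofReal |cdf μ t - cdf ν t|
      = ∫⁻ t, volume.restrict (Ioo 0 1) (Prod.mk t ⁻¹' E) := lintegral_congr fun t =>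
        (Real.volume_restrict_Ioo_Iic_symmDiff_Iic ⟨cdf_nonneg μ t, cdf_le_one μ t⟩
          ⟨cdf_nonneg ν t, cdf_le_one ν t⟩).symm
    _ = volume.prod (volume.restrict (Ioo 0 1)) E := (Measure.prod_apply hE).symm
    _ = ∫⁻ p in Ioo 0 1, volume ((fun t => (t, p)) ⁻¹' E) := Measure.prod_apply_symm hE
    _ = ∫⁻ p in Ioo 0 1, ENNReal.ofReal |Finv p - Ginv p| := by
      refine setLIntegral_congr_fun measurableSet_Ioo fun p hp => ?_
      change volume ({t | p ≤ cdf μ t} ∆ {t | p ≤ cdf ν t}) = _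
      rw [setOf_le_cdf_eq_Ici_sInf μ hp, setOf_le_cdf_eq_Ici_sInf ν hp, ← hFinv p hp,
        ← hGinv p hp, Real.volume_Ici_symmDiff_Ici]
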